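/- Let g be the unique solution of the Cauchy problem g' = 1/√(a∘g), g(0) = 0, g > 0 on (0,∞). Assume f is integrable on (M,∞) for every M > 0. Then lim_{s→0⁺} (∫_{g(s)}^{+∞} f(ξ)dξ) / s^{(1−γ)/(1−μ)} = f₀ · a₀^{(γ−1)/(2(1−μ))} · (γ−1)^{−1} · (1−μ)^{−(γ−1)/(1−μ)}. -/

import Mathlib

open Set Filter MeasureTheory
open scoped Topology

/-- `g` solves the Cauchy problem `g' = 1/√(a∘g)` on `(0,∞)`, `g(0) = 0`, `g > 0` on
`(0,∞)`, with `g ∈ C([0,∞)) ∩ C²((0,∞))`. -/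
def IsCauchyG (a : ℝ → ℝ) (g : ℝ → ℝ) : Prop :=
  ContinuousOn g (Ici 0) ∧ ContDiffOn ℝ 2 g (Ioi 0) ∧ g 0 = 0 ∧
  (∀ s > (0 : ℝ), 0 < g s) ∧
  ∀ s > (0 : ℝ), HasDerivAt g (1 / Real.sqrt (a (g s))) s

/-!
Two asymptotics are multiplied. First, `f(ξ) ~ f₀ ξ^{-γ}` at `0` gives
`∫_t^∞ f ~ f₀ t^{1-γ}/(γ-1)`: on `(t, δ]` compare `f` with `c ξ^{-γ}` for constants `c` on either
side of `f₀` (an upper bound for `f` is a lower bound for `-f`), while the tail beyond `δ` is a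
constant, negligible against `t^{1-γ}`. Second, `g' = 1/√(a∘g) ~ g^μ/√a₀`, so
`(g^{1-μ})' → (1-μ)/√a₀` and, by l'Hôpital, `g(s)^{1-μ} ~ (1-μ) s/√a₀`. Substituting `t = g(s)`
gives the limit.
-/

lemma tendsto_const_add_mul_rpow_nhdsGT_zero {p : ℝ} (hp : 0 < p) (A B : ℝ) :
    Tendsto (fun t : ℝ => A + B * t ^ p) (𝓝[>] 0) (𝓝 A) := by
  have h : ContinuousAt (fun t : ℝ => A + B * t ^ p) 0 :=
    continuousAt_const.add (continuousAt_const.mul (Real.continuousAt_rpow_const 0 p (.inr hp.le)))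
  simpa [Real.zero_rpow hp.ne'] using h.tendsto.mono_left nhdsWithin_le_nhds

lemma integral_Ioc_rpow_neg {γ t δ : ℝ} (hγ : 1 < γ) (ht : 0 < t) (htδ : t ≤ δ) :
    ∫ ξ in Ioc t δ, ξ ^ (-γ) = (t ^ (1 - γ) - δ ^ (1 - γ)) / (γ - 1) := by
  have h0 : (0 : ℝ) ∉ uIcc t δ := by
    rw [uIcc_of_le htδ]; exact fun h => ht.not_ge h.1
  rw [← intervalIntegral.integral_of_le htδ,
    integral_rpow (.inr ⟨by linarith, h0⟩), show -γ + 1 = 1 - γ by ring,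
    div_eq_div_iff (by linarith) (by linarith)]
  ring

lemma mul_integral_Ioc_rpow_neg_le {f : ℝ → ℝ} {γ c t δ : ℝ} (hγ : 1 < γ) (ht : 0 < t)
    (htδ : t ≤ δ) (hf : IntegrableOn f (Ioc t δ)) (hc : ∀ ξ ∈ Ioc t δ, c ≤ f ξ * ξ ^ γ) :
    c * ((t ^ (1 - γ) - δ ^ (1 - γ)) / (γ - 1)) ≤ ∫ ξ in Ioc t δ, f ξ := by
  have h0 : (0 : ℝ) ∉ uIcc t δ := by
    rw [uIcc_of_le htδ]; exact fun h => ht.not_ge h.1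
  have hrpow : IntegrableOn (fun ξ : ℝ => ξ ^ (-γ)) (Ioc t δ) :=
    (intervalIntegral.intervalIntegrable_rpow (.inr h0)).1
  rw [← integral_Ioc_rpow_neg hγ ht htδ, ← integral_const_mul]
  refine setIntegral_mono_on (hrpow.const_mul c) hf measurableSet_Ioc fun ξ hξ => ?_
  have hξ0 : 0 < ξ := ht.trans hξ.1
  calc c * ξ ^ (-γ) ≤ f ξ * ξ ^ γ * ξ ^ (-γ) := by gcongr; exact hc ξ hξ
    _ = f ξ := by rw [mul_assoc, ← Real.rpow_add hξ0, add_neg_cancel, Real.rpow_zero, mul_one]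

lemma eventually_lt_integral_Ioi_mul_rpow {f : ℝ → ℝ} {γ b c : ℝ} (hγ : 1 < γ)
    (hf : ∀ M > (0 : ℝ), IntegrableOn f (Ioi M)) (hc : ∀ᶠ ξ in 𝓝[>] 0, c ≤ f ξ * ξ ^ γ)
    (hb : b < c / (γ - 1)) :
    ∀ᶠ t in 𝓝[>] 0, b < (∫ ξ in Ioi t, f ξ) * t ^ (γ - 1) := by
  obtain ⟨δ, hδ, hcδ⟩ := mem_nhdsGT_iff_exists_Ioc_subset.mp hc
  set C := ∫ ξ in Ioi δ, f ξ
  have hlower := tendsto_const_add_mul_rpow_nhdsGT_zero (sub_pos.mpr hγ) (c / (γ - 1))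
    (C - c * δ ^ (1 - γ) / (γ - 1))
  filter_upwards [hlower.eventually_const_lt hb, Ioo_mem_nhdsGT hδ] with t hbt ⟨ht, htδ⟩
  have hsplit : ∫ ξ in Ioi t, f ξ = (∫ ξ in Ioc t δ, f ξ) + C := by
    rw [← Ioc_union_Ioi_eq_Ioi htδ.le, setIntegral_union (Ioc_disjoint_Ioi le_rfl)
      measurableSet_Ioi ((hf t ht).mono_set Ioc_subset_Ioi_self) (hf δ hδ)]
  have hIoc := mul_integral_Ioc_rpow_neg_le hγ ht htδ.le
    ((hf t ht).mono_set Ioc_subset_Ioi_self) fun ξ hξ => hcδ ⟨ht.trans hξ.1, hξ.2⟩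
  have htt : t ^ (1 - γ) * t ^ (γ - 1) = 1 := by
    rw [← Real.rpow_add ht, sub_add_sub_cancel', sub_self, Real.rpow_zero]
  calc b < c / (γ - 1) + (C - c * δ ^ (1 - γ) / (γ - 1)) * t ^ (γ - 1) := hbt
    _ = (c * ((t ^ (1 - γ) - δ ^ (1 - γ)) / (γ - 1)) + C) * t ^ (γ - 1) := by
      linear_combination (-c / (γ - 1)) * htt
    _ ≤ (∫ ξ in Ioi t, f ξ) * t ^ (γ - 1) := by
      rw [hsplit]; gcongr

lemma tendsto_integral_Ioi_mul_rpow {f : ℝ → ℝ} {γ L : ℝ} (hγ : 1 < γ)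
    (hf : ∀ M > (0 : ℝ), IntegrableOn f (Ioi M))
    (hlim : Tendsto (fun ξ : ℝ => f ξ * ξ ^ γ) (𝓝[>] 0) (𝓝 L)) :
    Tendsto (fun t : ℝ => (∫ ξ in Ioi t, f ξ) * t ^ (γ - 1)) (𝓝[>] 0) (𝓝 (L / (γ - 1))) := by
  have hγ1 : 0 < γ - 1 := sub_pos.mpr hγ
  refine tendsto_order.mpr ⟨fun b hb => ?_, fun b hb => ?_⟩
  · obtain ⟨c, hbc, hcL⟩ := exists_between ((lt_div_iff₀ hγ1).mp hb)
    exact eventually_lt_integral_Ioi_mul_rpow hγ hf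
      ((hlim.eventually (eventually_gt_nhds hcL)).mono fun _ => le_of_lt)
      ((lt_div_iff₀ hγ1).mpr hbc)
  · obtain ⟨c, hLc, hcb⟩ := exists_between ((div_lt_iff₀ hγ1).mp hb)
    have hneg := eventually_lt_integral_Ioi_mul_rpow (f := fun ξ => -f ξ) (b := -b) (c := -c) hγ
      (fun M hM => (hf M hM).neg)
      ((hlim.eventually (eventually_lt_nhds hLc)).mono fun ξ h => by linarith)
      (by rw [neg_div, neg_lt_neg_iff, div_lt_iff₀ hγ1]; exact hcb)
    filter_upwards [hneg] with t ht
    rw [integral_neg] at ht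
    linarith

lemma IsCauchyG.tendsto_nhdsGT_zero {a g : ℝ → ℝ} (hg : IsCauchyG a g) :
    Tendsto g (𝓝[>] 0) (𝓝[>] 0) := by
  obtain ⟨hcont, -, hg0, hpos, -⟩ := hg
  refine tendsto_nhdsWithin_iff.mpr ⟨?_, eventually_nhdsWithin_of_forall hpos⟩
  have h := (hcont 0 self_mem_Ici).tendsto
  rw [hg0] at h
  exact h.mono_left (nhdsWithin_mono _ Ioi_subset_Ici_self)

lemma tendsto_rpow_one_sub_div_of_hasDerivAt {a g : ℝ → ℝ} {a₀ μ : ℝ} (ha₀ : 0 < a₀)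
    (hμ : μ < 1) (hlim_a : Tendsto (fun s : ℝ => a s * s ^ (2 * μ)) (𝓝[>] 0) (𝓝 a₀))
    (hg0 : Tendsto g (𝓝[>] 0) (𝓝[>] 0))
    (hderiv : ∀ᶠ s in 𝓝[>] 0, HasDerivAt g (1 / √(a (g s))) s) :
    Tendsto (fun s : ℝ => g s ^ (1 - μ) / s) (𝓝[>] 0) (𝓝 ((1 - μ) * (√a₀)⁻¹)) := by
  have h1μ : 0 < 1 - μ := sub_pos.mpr hμ
  have hgpos : ∀ᶠ s in 𝓝[>] 0, 0 < g s := hg0 self_mem_nhdsWithin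
  have hnum : Tendsto (fun s => g s ^ (1 - μ)) (𝓝[>] 0) (𝓝 0) := by
    simpa [Function.comp_def] using (tendsto_const_add_mul_rpow_nhdsGT_zero h1μ 0 1).comp hg0
  have hratio : Tendsto (fun s => (1 - μ) * (√(a (g s) * g s ^ (2 * μ)))⁻¹) (𝓝[>] 0)
      (𝓝 ((1 - μ) * (√a₀)⁻¹)) :=
    (((Real.continuous_sqrt.tendsto a₀).comp (hlim_a.comp hg0)).inv₀
      (Real.sqrt_pos.mpr ha₀).ne').const_mul _
  refine HasDerivAt.lhopital_zero_nhdsGT (f' := fun s => 1 / √(a (g s)) * (1 - μ) *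
      g s ^ ((1 - μ) - 1)) (g' := fun _ => 1) ?_ (.of_forall hasDerivAt_id) (.of_forall
      fun _ => one_ne_zero) hnum (tendsto_id.mono_right nhdsWithin_le_nhds) ?_
  · filter_upwards [hderiv, hgpos] with s hs hgs
    exact hs.rpow_const (.inl hgs.ne')
  · refine hratio.congr' ?_
    filter_upwards [hgpos] with s hgs
    rw [show g s ^ (2 * μ) = (g s ^ μ) ^ 2 by
        rw [← Real.rpow_natCast, ← Real.rpow_mul hgs.le]; ring_nf,
      Real.sqrt_mul' _ (sq_nonneg _), Real.sqrt_sq (Real.rpow_nonneg hgs.le μ),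
      show (1 - μ) - 1 = -μ by ring, Real.rpow_neg hgs.le]
    field_simp

theorem integral_tail_asymptotics_general (a : ℝ → ℝ)
    (f : ℝ → ℝ)
    (a₀ f₀ μ γ : ℝ) (ha₀ : 0 < a₀) (hμ₁ : μ < 1) (hγ : 1 < γ)
    (hlim_a : Tendsto (fun s : ℝ => a s * s ^ (2 * μ)) (𝓝[>] 0) (𝓝 a₀))
    (hlim_f : Tendsto (fun s : ℝ => f s * s ^ γ) (𝓝[>] 0) (𝓝 f₀))
    (hf_int : ∀ M > (0 : ℝ), IntegrableOn f (Ioi M))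
    (g : ℝ → ℝ) (hg : IsCauchyG a g) :
    Tendsto (fun s : ℝ => (∫ ξ in Ioi (g s), f ξ) / s ^ ((1 - γ) / (1 - μ))) (𝓝[>] 0)
      (𝓝 (f₀ * a₀ ^ ((γ - 1) / (2 * (1 - μ))) * (γ - 1)⁻¹ *
        (1 - μ) ^ (-(γ - 1) / (1 - μ)))) := by
  have h1μ : 0 < 1 - μ := sub_pos.mpr hμ₁
  have hg0 := hg.tendsto_nhdsGT_zero
  have htail := (tendsto_integral_Ioi_mul_rpow hγ hf_int hlim_f).comp hg0
  have hpow := (tendsto_rpow_one_sub_div_of_hasDerivAt ha₀ hμ₁ hlim_a hg0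
    (eventually_nhdsWithin_of_forall hg.2.2.2.2)).rpow_const (p := (1 - γ) / (1 - μ))
    (.inl (by positivity))
  convert (htail.mul hpow).congr' ?_ using 2
  · rw [Real.mul_rpow h1μ.le (by positivity), Real.inv_rpow (Real.sqrt_nonneg _),
      Real.sqrt_eq_rpow, ← Real.rpow_mul ha₀.le, ← Real.rpow_neg ha₀.le,
      show -(1 / 2 * ((1 - γ) / (1 - μ))) = (γ - 1) / (2 * (1 - μ)) by field_simp; ring,
      show (1 - γ) / (1 - μ) = -(γ - 1) / (1 - μ) by ring]
    ring
  · filter_upwards [self_mem_nhdsWithin, hg0 self_mem_nhdsWithin] with s hs hgs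
    rw [Function.comp_apply, Real.div_rpow (Real.rpow_nonneg hgs.le _) (le_of_lt hs),
      ← Real.rpow_mul hgs.le, mul_div_cancel₀ _ h1μ.ne', mul_div_assoc', mul_assoc,
      ← Real.rpow_add hgs, sub_add_sub_cancel', sub_self, Real.rpow_zero, mul_one]

/-- Asymptotic behavior of `∫_{g(s)}^{+∞} f(ξ) dξ` at the origin:
`lim_{s→0⁺} (∫_{g(s)}^{+∞} f)/s^{(1−γ)/(1−μ)}
  = f₀ a₀^{(γ−1)/(2(1−μ))} (γ−1)⁻¹ (1−μ)^{−(γ−1)/(1−μ)}`. -/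
theorem integral_tail_asymptotics (a : ℝ → ℝ) (ha_pos : ∀ s > (0 : ℝ), 0 < a s)
    (ha_reg : ContDiffOn ℝ 1 a (Ioi 0)) (ha_bdd : ∃ c > (0 : ℝ), ∀ s > (0 : ℝ), c ≤ a s)
    (f : ℝ → ℝ) (hf_pos : ∀ s > (0 : ℝ), 0 < f s) (hf_reg : ContDiffOn ℝ 1 f (Ioi 0))
    (a₀ f₀ μ γ : ℝ) (ha₀ : 0 < a₀) (hf₀ : 0 < f₀) (hμ₀ : 0 ≤ μ) (hμ₁ : μ < 1) (hγ : 1 < γ)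
    (hlim_a : Tendsto (fun s : ℝ => a s * s ^ (2 * μ)) (𝓝[>] 0) (𝓝 a₀))
    (hlim_f : Tendsto (fun s : ℝ => f s * s ^ γ) (𝓝[>] 0) (𝓝 f₀))
    (hf_int : ∀ M > (0 : ℝ), IntegrableOn f (Ioi M))
    (g : ℝ → ℝ) (hg : IsCauchyG a g) :
    Tendsto (fun s : ℝ => (∫ ξ in Ioi (g s), f ξ) / s ^ ((1 - γ) / (1 - μ))) (𝓝[>] 0)
      (𝓝 (f₀ * a₀ ^ ((γ - 1) / (2 * (1 - μ))) * (γ - 1)⁻¹ *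
        (1 - μ) ^ (-(γ - 1) / (1 - μ)))) :=
  integral_tail_asymptotics_general a f a₀ f₀ μ γ ha₀ hμ₁ hγ hlim_a hlim_f hf_int g hg
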